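/- arXiv:2602.16436 — 3 statements merged into one kernel-verified Lean document; each statement's English description precedes it below -/
import Mathlib

section
/- Let ε > 0, y ∈ {-1,1}, and g : {-1,1} → ℝ. Let ỹ be the randomized response of y (ỹ = y with probability S(ε) = 1/(1+e^{-ε}), else -y). Then the variance of B_ε^{-1}[g](ỹ) = S̃(ε)g(ỹ) + (1-S̃(ε))g(-ỹ), where S̃(ε) = 1/(1-e^{-ε}), equals S̃(ε)(S̃(ε)-1)·(g(1)-g(-1))², which also equals e^ε/(e^ε-1)² · (g(1)-g(-1))². -/
noncomputable def S (ε : ℝ) : ℝ := 1 / (1 + Real.exp (-ε))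
noncomputable def Stilde (ε : ℝ) : ℝ := 1 / (1 - Real.exp (-ε))

/-- The inverse Bernoulli transform `B_ε⁻¹[g](y) = S̃(ε) g(y) + (1 - S̃(ε)) g(-y)`. -/
noncomputable def Binv (ε : ℝ) (g : ℝ → ℝ) (y : ℝ) : ℝ :=
  Stilde ε * g y + (1 - Stilde ε) * g (-y)

/-- Expectation of `h(ỹ)` under randomized response of `y` with keep-probability `S(ε)`. -/
noncomputable def rrExp (ε : ℝ) (h : ℝ → ℝ) (y : ℝ) : ℝ :=
  S ε * h y + (1 - S ε) * h (-y)

/-- the variance of `B_ε⁻¹[g](ỹ)` under randomized response of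
`y ∈ {-1,1}` equals `S̃(ε)(S̃(ε)-1)(g(1)-g(-1))²`, which also equals
`e^ε/(e^ε-1)² · (g(1)-g(-1))²`. -/
theorem binv_variance (ε : ℝ) (hε : 0 < ε) (g : ℝ → ℝ) (y : ℝ)
    (hy : y = 1 ∨ y = -1) :
    rrExp ε (fun z => (Binv ε g z) ^ 2) y - (rrExp ε (Binv ε g) y) ^ 2
        = Stilde ε * (Stilde ε - 1) * (g 1 - g (-1)) ^ 2 ∧
    rrExp ε (fun z => (Binv ε g z) ^ 2) y - (rrExp ε (Binv ε g) y) ^ 2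
        = Real.exp ε / (Real.exp ε - 1) ^ 2 * (g 1 - g (-1)) ^ 2 := by
  have he : 0 < Real.exp (-ε) := Real.exp_pos _
  have he1 : Real.exp (-ε) < 1 := Real.exp_lt_one_iff.mpr (by linarith)
  have h1 : (1 : ℝ) + Real.exp (-ε) ≠ 0 := by positivity
  have h2 : (1 : ℝ) - Real.exp (-ε) ≠ 0 := by linarith
  have hE : Real.exp ε ≠ 0 := (Real.exp_pos ε).ne'
  have h3 : Real.exp ε - 1 ≠ 0 := by
    have : 1 < Real.exp ε := by
      rw [← Real.exp_zero]; exact Real.exp_lt_exp.mpr hε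
    linarith
  have hkey : Stilde ε * (Stilde ε - 1) = Real.exp ε / (Real.exp ε - 1) ^ 2 := by
    simp only [Stilde, Real.exp_neg]
    field_simp
    ring
  have hmain : rrExp ε (fun z => (Binv ε g z) ^ 2) y - (rrExp ε (Binv ε g) y) ^ 2
      = Stilde ε * (Stilde ε - 1) * (g 1 - g (-1)) ^ 2 := by
    rcases hy with rfl | rfl <;>
    · simp only [rrExp, Binv, S, Stilde, neg_neg]
      field_simp
      ring
  exact ⟨hmain, by rw [hmain, hkey]⟩
end

section
/- Let ℓ(θ,x,y) = exp(-θᵀxy) with θ ∈ ℝ^p, x ∈ ℝ^p, y ∈ {-1,1}. Let (x̃, ỹ) be the LDP release: x̃ = x + w with w ~ N(0, σ²I_p) independent of ỹ, and ỹ the randomized response of y with keep-probability S(ε) = 1/(1+e^{-ε}). Define the IWP loss estimator ℓ̃(θ, x̃, ỹ) = e^{-σ²‖θ‖²/2}[S̃(ε)·exp(-θᵀx̃ỹ) + (1-S̃(ε))·exp(θᵀx̃ỹ)] with S̃(ε) = 1/(1-e^{-ε}). Then E_{x̃,ỹ}[ℓ̃(θ, x̃, ỹ)] = exp(-θᵀxy)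 = ℓ(θ,x,y). -/
/-! Since `⟪θ, w⟫ ~ N(0, σ²‖θ‖²)` under the Gaussian mechanism, averaging `exp(∓⟪θ, x + w⟫ỹ)` over
`w` multiplies `exp(∓⟪θ, x⟫ỹ)` by the mgf value `exp(σ²‖θ‖²ỹ²/2) = exp(σ²‖θ‖²/2)`, which the
prefactor of `ℓ̃` cancels. What remains is the debiased randomized-response average, and its
expectation over `ỹ` is `exp(-⟪θ, x⟫y)` by the identities `S S̃ + (1 - S)(1 - S̃) = 1` and
`S (1 - S̃) + (1 - S) S̃ = 0`, which hold as soon as `ε ≠ 0`. -/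

open MeasureTheory ProbabilityTheory

/-- The isotropic Gaussian measure `N(0, v·I_p)` on `ℝ^p`. -/
noncomputable def gaussPi (p : ℕ) (v : ℝ) : Measure (EuclideanSpace ℝ (Fin p)) :=
  Measure.map (WithLp.toLp 2) (Measure.pi fun _ : Fin p => gaussianReal 0 v.toNNReal)

/-- The IWP loss estimator for the exponential loss:
`ℓ̃(θ, x̃, ỹ) = e^{-σ²‖θ‖²/2}[S̃(ε) exp(-θᵀx̃ỹ) + (1-S̃(ε)) exp(θᵀx̃ỹ)]`. -/
noncomputable def iwpExp (p : ℕ) (σ ε : ℝ) (θ xt : EuclideanSpace ℝ (Fin p))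
    (yt : ℝ) : ℝ :=
  Real.exp (-(σ ^ 2) * ‖θ‖ ^ 2 / 2) *
    (Stilde ε * Real.exp (-(inner ℝ θ xt : ℝ) * yt)
      + (1 - Stilde ε) * Real.exp ((inner ℝ θ xt : ℝ) * yt))

lemma integral_gaussPi_eq_integral_pi {p : ℕ} (v : ℝ) (f : EuclideanSpace ℝ (Fin p) → ℝ) :
    ∫ w, f w ∂gaussPi p v
      = ∫ w, f (WithLp.toLp 2 w) ∂(Measure.pi fun _ : Fin p => gaussianReal 0 v.toNNReal) :=
  integral_map_equiv (MeasurableEquiv.toLp 2 (Fin p → ℝ)) f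

instance (p : ℕ) (v : ℝ) : IsProbabilityMeasure (gaussPi p v) :=
  Measure.isProbabilityMeasure_map (PiLp.continuous_toLp 2 _).aemeasurable

lemma integral_exp_mul_gaussianReal (v : NNReal) (s : ℝ) :
    ∫ x, Real.exp (s * x) ∂gaussianReal 0 v = Real.exp (v * s ^ 2 / 2) := by
  simpa [mgf] using congrFun (mgf_fun_id_gaussianReal (μ := 0) (v := v)) s

lemma exp_mul_inner_toLp {ι : Type*} [Fintype ι] (θ : EuclideanSpace ℝ ι) (t : ℝ) (w : ι → ℝ) :
    Real.exp (t * inner ℝ θ (WithLp.toLp 2 w)) = ∏ i, Real.exp (t * θ i * w i) := by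
  simp only [PiLp.inner_apply, RCLike.inner_apply, conj_trivial, Finset.mul_sum, Real.exp_sum]
  exact Finset.prod_congr rfl fun i _ => by rw [mul_comm (w i), mul_assoc]

lemma mgf_inner_gaussPi (p : ℕ) {v : ℝ} (hv : 0 ≤ v) (θ : EuclideanSpace ℝ (Fin p)) (t : ℝ) :
    mgf (fun w => inner ℝ θ w) (gaussPi p v) t = Real.exp (v * ‖θ‖ ^ 2 * t ^ 2 / 2) := by
  rw [mgf, integral_gaussPi_eq_integral_pi]
  simp only [exp_mul_inner_toLp]
  rw [integral_fintype_prod_eq_prod (fun i x => Real.exp (t * θ i * x))]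
  simp only [integral_exp_mul_gaussianReal, Real.coe_toNNReal v hv, ← Real.exp_sum,
    EuclideanSpace.norm_sq_eq, Real.norm_eq_abs, sq_abs, Finset.mul_sum, Finset.sum_mul,
    Finset.sum_div]
  exact congrArg Real.exp (Finset.sum_congr rfl fun i _ => by ring)

lemma mgf_inner_add_gaussPi (p : ℕ) {v : ℝ} (hv : 0 ≤ v) (θ x : EuclideanSpace ℝ (Fin p))
    (t : ℝ) :
    mgf (fun w => inner ℝ θ (x + w)) (gaussPi p v) t
      = Real.exp (t * inner ℝ θ x) * Real.exp (v * ‖θ‖ ^ 2 * t ^ 2 / 2) := by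
  simp only [inner_add_right, mgf_const_add, mgf_inner_gaussPi p hv]

lemma integrable_exp_mul_inner_add_gaussPi (p : ℕ) {v : ℝ} (hv : 0 ≤ v)
    (θ x : EuclideanSpace ℝ (Fin p)) (t : ℝ) :
    Integrable (fun w => Real.exp (t * inner ℝ θ (x + w))) (gaussPi p v) := by
  rw [← mgf_pos_iff, mgf_inner_add_gaussPi p hv]
  positivity

lemma integral_iwpExp_add_gaussPi (p : ℕ) (σ ε : ℝ) (θ x : EuclideanSpace ℝ (Fin p))
    {yt : ℝ} (hyt : yt ^ 2 = 1) :
    ∫ w, iwpExp p σ ε θ (x + w) yt ∂(gaussPi p (σ ^ 2))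
      = Stilde ε * Real.exp (-(inner ℝ θ x : ℝ) * yt)
        + (1 - Stilde ε) * Real.exp ((inner ℝ θ x : ℝ) * yt) := by
  have hv : 0 ≤ σ ^ 2 := sq_nonneg σ
  set C := Real.exp (-(σ ^ 2) * ‖θ‖ ^ 2 / 2)
  set M := mgf (fun w => inner ℝ θ (x + w)) (gaussPi p (σ ^ 2))
  have hM : ∀ t, t ^ 2 = 1 → C * M t = Real.exp (t * inner ℝ θ x) := by
    intro t ht
    simp only [C, M, mgf_inner_add_gaussPi p hv, ht]
    rw [mul_left_comm, ← Real.exp_add,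
      show -(σ ^ 2) * ‖θ‖ ^ 2 / 2 + σ ^ 2 * ‖θ‖ ^ 2 * 1 / 2 = 0 by ring, Real.exp_zero, mul_one]
  have hintegrand : ∀ w, iwpExp p σ ε θ (x + w) yt
      = C * (Stilde ε * Real.exp (-yt * inner ℝ θ (x + w))
        + (1 - Stilde ε) * Real.exp (yt * inner ℝ θ (x + w))) := by
    intro w
    simp only [iwpExp, C, neg_mul, mul_comm yt]
  calc ∫ w, iwpExp p σ ε θ (x + w) yt ∂(gaussPi p (σ ^ 2))
      = Stilde ε * (C * M (-yt)) + (1 - Stilde ε) * (C * M yt) := by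
        simp only [hintegrand, integral_const_mul, M, mgf]
        rw [integral_add ((integrable_exp_mul_inner_add_gaussPi p hv θ x _).const_mul _)
          ((integrable_exp_mul_inner_add_gaussPi p hv θ x _).const_mul _),
          integral_const_mul, integral_const_mul]
        ring
    _ = _ := by
        rw [hM _ (by rw [neg_sq, hyt]), hM _ hyt, mul_comm (-yt), mul_comm yt, mul_neg, neg_mul]

lemma one_sub_exp_neg_ne_zero {ε : ℝ} (hε : ε ≠ 0) : 1 - Real.exp (-ε) ≠ 0 := by
  rw [sub_ne_zero, ne_comm, Ne, Real.exp_eq_one_iff, neg_eq_zero]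
  exact hε

lemma S_mul_Stilde_add_one_sub_mul_one_sub {ε : ℝ} (hε : ε ≠ 0) :
    S ε * Stilde ε + (1 - S ε) * (1 - Stilde ε) = 1 := by
  have h := one_sub_exp_neg_ne_zero hε
  have : 1 + Real.exp (-ε) ≠ 0 := by positivity
  simp only [S, Stilde]
  field_simp
  ring

lemma S_mul_one_sub_Stilde_add_one_sub_mul {ε : ℝ} (hε : ε ≠ 0) :
    S ε * (1 - Stilde ε) + (1 - S ε) * Stilde ε = 0 := by
  have h := one_sub_exp_neg_ne_zero hε
  have : 1 + Real.exp (-ε) ≠ 0 := by positivity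
  simp only [S, Stilde]
  field_simp
  ring

theorem iwp_exp_unbiased_general (p : ℕ) (σ ε : ℝ) (hε : 0 < ε)
    (θ x : EuclideanSpace ℝ (Fin p)) (y : ℝ) (hy : y = 1 ∨ y = -1) :
    S ε * (∫ w, iwpExp p σ ε θ (x + w) y ∂(gaussPi p (σ ^ 2)))
      + (1 - S ε) * (∫ w, iwpExp p σ ε θ (x + w) (-y) ∂(gaussPi p (σ ^ 2)))
      = Real.exp (-(inner ℝ θ x : ℝ) * y) := by
  have hy2 : y ^ 2 = 1 := by rcases hy with rfl | rfl <;> norm_num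
  rw [integral_iwpExp_add_gaussPi p σ ε θ x hy2,
    integral_iwpExp_add_gaussPi p σ ε θ x (by rw [neg_sq, hy2]), neg_mul_neg, mul_neg, ← neg_mul]
  linear_combination
    Real.exp (-(inner ℝ θ x : ℝ) * y) * S_mul_Stilde_add_one_sub_mul_one_sub hε.ne'
      + Real.exp ((inner ℝ θ x : ℝ) * y) * S_mul_one_sub_Stilde_add_one_sub_mul hε.ne'

/-- the IWP loss estimator of the exponential loss is unbiased:
taking the expectation over the Gaussian mechanism `x̃ = x + w`,
`w ~ N(0, σ²I_p)`, and the independent randomized response `ỹ` of `y` with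
keep-probability `S(ε)`, we get `E[ℓ̃(θ, x̃, ỹ)] = exp(-θᵀxy)`. -/
theorem iwp_exp_unbiased (p : ℕ) (σ ε : ℝ) (hσ : 0 < σ) (hε : 0 < ε)
    (θ x : EuclideanSpace ℝ (Fin p)) (y : ℝ) (hy : y = 1 ∨ y = -1) :
    S ε * (∫ w, iwpExp p σ ε θ (x + w) y ∂(gaussPi p (σ ^ 2)))
      + (1 - S ε) * (∫ w, iwpExp p σ ε θ (x + w) (-y) ∂(gaussPi p (σ ^ 2)))
      = Real.exp (-(inner ℝ θ x : ℝ) * y) :=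
  iwp_exp_unbiased_general p σ ε hε θ x y hy
end

section
/- Let Θ ⊂ ℝ^k be closed, convex, nonempty, R : ℝ^k → ℝ be μ-strongly convex and K-smooth with minimizer θ* ∈ Θ, and let g be a random vector with E[g] = ∇R(θ) and E‖g‖² ≤ 2K(R(θ) - R(θ*)) + A for some A ≥ 0. Then for θ⁺ = Π_Θ(θ - γg) with step size 0 < γ ≤ 1/(2K), it holds that E‖θ⁺ - θ*‖² ≤ (1-γμ)‖θ - θ*‖² - γ(R(θ) - R(θ*)) + γ²A, where Π_Θ is the Euclidean projection onto Θ. -/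
/-!
Projecting onto `Θ` can only bring a point closer to `θ* ∈ Θ`, so it suffices to bound
`E‖θ - θ* - γ g‖² = ‖θ - θ*‖² - 2γ⟪θ - θ*, ∇R(θ)⟫ + γ² E‖g‖²`. Strong convexity between `θ` and
`θ*` bounds the inner product below by `R(θ) - R(θ*) + (μ/2)‖θ - θ*‖²`, and since `2γK ≤ 1`
the term `γ² · 2K(R(θ) - R(θ*))` from the second-moment bound eats only half of the resulting
descent `2γ(R(θ) - R(θ*))`.
-/

open MeasureTheory RealInnerProductSpace

def IsMetricProjection {E : Type*} [NormedAddCommGroup E] (Θ : Set E) (proj : E → E) : Prop :=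
  ∀ z, proj z ∈ Θ ∧ ∀ u ∈ Θ, ‖proj z - z‖ ≤ ‖u - z‖

namespace IsMetricProjection

variable {E : Type*} [NormedAddCommGroup E] {Θ : Set E} {proj : E → E}

theorem mem (hP : IsMetricProjection Θ proj) (z : E) : proj z ∈ Θ := (hP z).1

variable [InnerProductSpace ℝ E]

theorem inner_sub_nonpos (hP : IsMetricProjection Θ proj) (hΘ : Convex ℝ Θ) (z : E)
    {u : E} (hu : u ∈ Θ) : ⟪z - proj z, u - proj z⟫ ≤ 0 := by
  have : Nonempty Θ := ⟨⟨proj z, hP.mem z⟩⟩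
  refine (norm_eq_iInf_iff_real_inner_le_zero hΘ (hP.mem z)).mp (le_antisymm ?_ ?_) u hu
  · exact le_ciInf fun w => by simpa only [norm_sub_rev] using (hP z).2 w w.2
  · exact ciInf_le (f := fun w : Θ => ‖z - w‖) ⟨0, by rintro _ ⟨w, rfl⟩; exact norm_nonneg _⟩
      ⟨proj z, hP.mem z⟩

theorem norm_apply_sub_sq_le (hP : IsMetricProjection Θ proj) (hΘ : Convex ℝ Θ) (z : E)
    {u : E} (hu : u ∈ Θ) : ‖proj z - u‖ ^ 2 ≤ ‖z - u‖ ^ 2 := by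
  have hobtuse : 0 ≤ ⟪z - proj z, proj z - u⟫ := by
    rw [← neg_sub u, inner_neg_right, neg_nonneg]
    exact hP.inner_sub_nonpos hΘ z hu
  rw [← sub_add_sub_cancel z (proj z) u, norm_add_sq_real]
  nlinarith [sq_nonneg ‖z - proj z‖]

end IsMetricProjection

section StochasticStep

variable {Ω E : Type*} [NormedAddCommGroup E] [InnerProductSpace ℝ E] [MeasurableSpace Ω]
  {P : Measure Ω} {g : Ω → E}

theorem norm_sub_smul_sq (x v : E) (γ : ℝ) :
    ‖x - γ • v‖ ^ 2 = ‖x‖ ^ 2 - 2 * γ * ⟪x, v⟫ + γ ^ 2 * ‖v‖ ^ 2 := by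
  rw [norm_sub_sq_real, real_inner_smul_right, norm_smul, mul_pow, Real.norm_eq_abs, sq_abs]
  ring

theorem integrable_norm_sub_smul_sq [IsFiniteMeasure P] (hg : Integrable g P)
    (hg2 : Integrable (fun ω => ‖g ω‖ ^ 2) P) (x : E) (γ : ℝ) :
    Integrable (fun ω => ‖x - γ • g ω‖ ^ 2) P := by
  simp_rw [norm_sub_smul_sq]
  exact ((integrable_const _).sub ((hg.const_inner x).const_mul _)).add (hg2.const_mul _)

theorem integral_norm_sub_smul_sq [CompleteSpace E] [IsProbabilityMeasure P]
    (hg : Integrable g P) (hg2 : Integrable (fun ω => ‖g ω‖ ^ 2) P) (x : E) (γ : ℝ) :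
    ∫ ω, ‖x - γ • g ω‖ ^ 2 ∂P
      = ‖x‖ ^ 2 - 2 * γ * ⟪x, ∫ ω, g ω ∂P⟫ + γ ^ 2 * ∫ ω, ‖g ω‖ ^ 2 ∂P := by
  have hinner : Integrable (fun ω => 2 * γ * ⟪x, g ω⟫) P := (hg.const_inner x).const_mul _
  simp_rw [norm_sub_smul_sq]
  rw [integral_add (f := fun ω => ‖x‖ ^ 2 - 2 * γ * ⟪x, g ω⟫)
      ((integrable_const _).sub hinner) (hg2.const_mul _),
    integral_sub (integrable_const _) hinner, integral_const, integral_const_mul,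
    integral_const_mul, integral_inner hg]
  simp

end StochasticStep

theorem sgd_one_step_general (k : ℕ) (μ K A γ : ℝ) (hγ : 0 < γ) (hγK : γ ≤ 1 / (2 * K))
    (Θ : Set (EuclideanSpace ℝ (Fin k))) (hΘcv : Convex ℝ Θ)
    (R : EuclideanSpace ℝ (Fin k) → ℝ)
    (hsc : ∀ u v, (inner ℝ (gradient R v) (u - v) : ℝ) + μ / 2 * ‖u - v‖ ^ 2
      ≤ R u - R v)
    (θstar : EuclideanSpace ℝ (Fin k)) (hθstar : θstar ∈ Θ)
    (hmin : ∀ u, R θstar ≤ R u)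
    (proj : EuclideanSpace ℝ (Fin k) → EuclideanSpace ℝ (Fin k))
    (hproj : ∀ z, proj z ∈ Θ ∧ ∀ u ∈ Θ, ‖proj z - z‖ ≤ ‖u - z‖)
    (Ω : Type*) [MeasureSpace Ω] (P : Measure Ω) [IsProbabilityMeasure P]
    (g : Ω → EuclideanSpace ℝ (Fin k)) (hgInt : Integrable g P)
    (hg2Int : Integrable (fun ω => ‖g ω‖ ^ 2) P)
    (θ : EuclideanSpace ℝ (Fin k))
    (hmean : ∫ ω, g ω ∂P = gradient R θ)
    (hvar : ∫ ω, ‖g ω‖ ^ 2 ∂P ≤ 2 * K * (R θ - R θstar) + A) :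
    ∫ ω, ‖proj (θ - γ • g ω) - θstar‖ ^ 2 ∂P
      ≤ (1 - γ * μ) * ‖θ - θstar‖ ^ 2 - γ * (R θ - R θstar) + γ ^ 2 * A := by
  have hP : IsMetricProjection Θ proj := hproj
  have hstep : γ * (2 * K) ≤ 1 :=
    (le_div_iff₀ (one_div_pos.mp (hγ.trans_le hγK))).mp hγK
  have hgap : 0 ≤ R θ - R θstar := sub_nonneg.mpr (hmin θ)
  have hstrong : R θ - R θstar + μ / 2 * ‖θ - θstar‖ ^ 2 ≤ ⟪θ - θstar, gradient R θ⟫ := by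
    have := hsc θstar θ
    rw [norm_sub_rev, ← neg_sub θ θstar, inner_neg_right, real_inner_comm] at this
    linarith
  have hbound := integrable_norm_sub_smul_sq hgInt hg2Int (θ - θstar) γ
  -- `integral_mono_of_nonneg` needs no integrability of the left side, hence no regularity of `proj`
  calc ∫ ω, ‖proj (θ - γ • g ω) - θstar‖ ^ 2 ∂P
      ≤ ∫ ω, ‖(θ - θstar) - γ • g ω‖ ^ 2 ∂P := by
        refine integral_mono_of_nonneg (.of_forall fun _ => by positivity) hbound
          (.of_forall fun ω => ?_)
        dsimp only
        rw [← sub_right_comm]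
        exact hP.norm_apply_sub_sq_le hΘcv _ hθstar
    _ = ‖θ - θstar‖ ^ 2 - 2 * γ * ⟪θ - θstar, gradient R θ⟫ + γ ^ 2 * ∫ ω, ‖g ω‖ ^ 2 ∂P := by
        rw [integral_norm_sub_smul_sq hgInt hg2Int, hmean]
    _ ≤ (1 - γ * μ) * ‖θ - θstar‖ ^ 2 - γ * (R θ - R θstar) + γ ^ 2 * A := by
        linarith [mul_le_mul_of_nonneg_left hstrong hγ.le,
          mul_le_mul_of_nonneg_left hvar (sq_nonneg γ),
          mul_le_mul_of_nonneg_left hstep (mul_nonneg hγ.le hgap)]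

/-- one-step SGD progress bound. Let `Θ ⊂ ℝ^k` be closed, convex,
nonempty, `R` be `μ`-strongly convex and `K`-smooth with (global) minimizer
`θ* ∈ Θ`, and `g` a random vector with `E[g] = ∇R(θ)` and
`E‖g‖² ≤ 2K(R(θ) - R(θ*)) + A`. Then for `θ⁺ = Π_Θ(θ - γ g)` with
`0 < γ ≤ 1/(2K)`, `E‖θ⁺ - θ*‖² ≤ (1-γμ)‖θ - θ*‖² - γ(R(θ) - R(θ*)) + γ²A`,
where `Π_Θ` is the Euclidean (metric) projection onto `Θ`. -/
theorem sgd_one_step (k : ℕ) (μ K A γ : ℝ) (hμ : 0 < μ) (hK : 0 < K)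
    (hA : 0 ≤ A) (hγ : 0 < γ) (hγK : γ ≤ 1 / (2 * K))
    (Θ : Set (EuclideanSpace ℝ (Fin k))) (hΘne : Θ.Nonempty)
    (hΘcl : IsClosed Θ) (hΘcv : Convex ℝ Θ)
    (R : EuclideanSpace ℝ (Fin k) → ℝ)
    (hsc : ∀ u v, (inner ℝ (gradient R v) (u - v) : ℝ) + μ / 2 * ‖u - v‖ ^ 2
      ≤ R u - R v)
    (hsm : ∀ u v, ‖gradient R u - gradient R v‖ ≤ K * ‖u - v‖)
    (θstar : EuclideanSpace ℝ (Fin k)) (hθstar : θstar ∈ Θ)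
    (hmin : ∀ u, R θstar ≤ R u)
    (proj : EuclideanSpace ℝ (Fin k) → EuclideanSpace ℝ (Fin k))
    (hproj : ∀ z, proj z ∈ Θ ∧ ∀ u ∈ Θ, ‖proj z - z‖ ≤ ‖u - z‖)
    (Ω : Type*) [MeasureSpace Ω] (P : Measure Ω) [IsProbabilityMeasure P]
    (g : Ω → EuclideanSpace ℝ (Fin k)) (hgInt : Integrable g P)
    (hg2Int : Integrable (fun ω => ‖g ω‖ ^ 2) P)
    (θ : EuclideanSpace ℝ (Fin k))
    (hmean : ∫ ω, g ω ∂P = gradient R θ)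
    (hvar : ∫ ω, ‖g ω‖ ^ 2 ∂P ≤ 2 * K * (R θ - R θstar) + A) :
    ∫ ω, ‖proj (θ - γ • g ω) - θstar‖ ^ 2 ∂P
      ≤ (1 - γ * μ) * ‖θ - θstar‖ ^ 2 - γ * (R θ - R θstar) + γ ^ 2 * A :=
  sgd_one_step_general k μ K A γ hγ hγK Θ hΘcv R hsc θstar hθstar hmin proj hproj Ω P g hgInt hg2Int
    θ hmean hvar
end
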